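/- (Orthogonality of the soliton profile to the force.) Let v ∈ ℝ³, let ρ ∈ C_c^∞(ℝ³) be real-valued, and let φ : ℝ³ → ℝ be a C² function satisfying the soliton profile equation Δφ(x) − (v·∇)²φ(x) = ρ(x) for all x ∈ ℝ³, where (v·∇)²φ = Σ_{j,k} v_j v_k ∂_j∂_k φ. Assume the decay |∇φ(x)| ≤ C(1 + |x|)^{−2} for some C > 0, and that the second derivatives of φ are bounded. Then the self-force vanishes: ∫_{ℝ³} ρ(x) ∇φ(x) dx = 0. -/

import Mathlib

set_option maxHeartbeats 1000000


open MeasureTheory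

/-- Partial derivative at `x` in the `i`-th coordinate direction. -/
noncomputable def pdR (i : Fin 3) (f : EuclideanSpace ℝ (Fin 3) → ℝ)
    (x : EuclideanSpace ℝ (Fin 3)) : ℝ :=
  deriv (fun s : ℝ => f (x + s • EuclideanSpace.single i (1 : ℝ))) 0

/-- The gradient, as a vector in `ℝ³`, with components the partial derivatives. -/
noncomputable def gradR (f : EuclideanSpace ℝ (Fin 3) → ℝ)
    (x : EuclideanSpace ℝ (Fin 3)) : EuclideanSpace ℝ (Fin 3) :=
  (EuclideanSpace.equiv (Fin 3) ℝ).symm (fun i => pdR i f x)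

local notation "E3" => EuclideanSpace ℝ (Fin 3)
local notation "eE" i => EuclideanSpace.single i (1:ℝ)

noncomputable def gX (φ : E3 → ℝ) (k : Fin 3) (x : E3) : ℝ := fderiv ℝ φ x (eE k)
noncomputable def dgX (φ : E3 → ℝ) (k : Fin 3) (x : E3) : E3 →L[ℝ] ℝ :=
  (ContinuousLinearMap.apply ℝ ℝ (eE k)).comp (fderiv ℝ (fderiv ℝ φ) x)
noncomputable def aX (φ : E3 → ℝ) (j k : Fin 3) (x : E3) : ℝ :=
  fderiv ℝ (fderiv ℝ φ) x (eE j) (eE k)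
noncomputable def wX (φ : E3 → ℝ) (v : E3) (x : E3) : ℝ := ∑ k, v k * gX φ k x
noncomputable def dwX (φ : E3 → ℝ) (v : E3) (x : E3) : E3 →L[ℝ] ℝ := ∑ k, v k • dgX φ k x
noncomputable def cX (i j : Fin 3) : ℝ := if j = i then 1/2 else 0
noncomputable def FX (φ : E3 → ℝ) (v : E3) (i j : Fin 3) (x : E3) : ℝ :=
  gX φ j x * gX φ i x - v j * (wX φ v x * gX φ i x)
    - cX i j * (∑ k, gX φ k x * gX φ k x - wX φ v x * wX φ v x)
noncomputable def F'X (φ : E3 → ℝ) (v : E3) (i j : Fin 3) (x : E3) : E3 →L[ℝ] ℝ :=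
  (gX φ j x • dgX φ i x + gX φ i x • dgX φ j x)
    - v j • (wX φ v x • dgX φ i x + gX φ i x • dwX φ v x)
    - cX i j • ((∑ k, (gX φ k x • dgX φ k x + gX φ k x • dgX φ k x))
        - (wX φ v x • dwX φ v x + wX φ v x • dwX φ v x))

section key
variable {φ : E3 → ℝ}

lemma hasFDerivAt_gX (hφ : ContDiff ℝ 2 φ) (k : Fin 3) (x : E3) :
    HasFDerivAt (gX φ k) (dgX φ k x) x := by
  have hd : ContDiff ℝ 1 (fderiv ℝ φ) := hφ.fderiv_right (by norm_num)
  exact ((ContinuousLinearMap.apply ℝ ℝ (eE k)).hasFDerivAt).comp x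
    ((hd.differentiable one_ne_zero x).hasFDerivAt)

lemma dgX_apply' (k j : Fin 3) (x : E3) :
    dgX φ k x (EuclideanSpace.single j (1:ℝ)) = aX φ j k x := rfl

lemma aX_symm (hφ : ContDiff ℝ 2 φ) (j k : Fin 3) (x : E3) :
    aX φ j k x = aX φ k j x :=
  (hφ.contDiffAt.isSymmSndFDerivAt (by simp)) _ _

lemma div_FX (hφ : ContDiff ℝ 2 φ) (v : E3) (i : Fin 3) (x : E3) :
    ∑ j, F'X φ v i j x (EuclideanSpace.single j (1:ℝ))
      = ((∑ j, aX φ j j x) - ∑ j, ∑ k, v j * v k * aX φ j k x) * gX φ i x := by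
  fin_cases i <;>
  · simp only [F'X, dwX, cX, wX, ContinuousLinearMap.sub_apply, ContinuousLinearMap.add_apply,
      ContinuousLinearMap.smul_apply, ContinuousLinearMap.sum_apply, dgX_apply',
      smul_eq_mul, Fin.sum_univ_three]
    norm_num [Fin.ext_iff, show ((⟨2, by norm_num⟩ : Fin 3)) = 2 from rfl, show ((⟨1, by norm_num⟩ : Fin 3)) = 1 from rfl, show ((⟨0, by norm_num⟩ : Fin 3)) = 0 from rfl]
    rw [aX_symm hφ 1 0 x, aX_symm hφ 2 0 x, aX_symm hφ 2 1 x]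
    ring

lemma continuous_gX (hφ : ContDiff ℝ 2 φ) (k : Fin 3) : Continuous (gX φ k) :=
  (ContinuousLinearMap.apply ℝ ℝ (eE k)).continuous.comp
    (hφ.fderiv_right (m := 1) (by norm_num)).continuous

lemma continuous_wX (hφ : ContDiff ℝ 2 φ) (v : E3) : Continuous (wX φ v) :=
  continuous_finset_sum _ fun k _ => continuous_const.mul (continuous_gX hφ k)

lemma continuous_FX (hφ : ContDiff ℝ 2 φ) (v : E3) (i j : Fin 3) :
    Continuous (FX φ v i j) :=
  (((continuous_gX hφ j).mul (continuous_gX hφ i)).sub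
      (continuous_const.mul ((continuous_wX hφ v).mul (continuous_gX hφ i)))).sub
    (continuous_const.mul ((continuous_finset_sum _ fun k _ =>
      (continuous_gX hφ k).mul (continuous_gX hφ k)).sub
      ((continuous_wX hφ v).mul (continuous_wX hφ v))))

lemma abs_coord_le_norm (x : E3) (j : Fin 3) : |x j| ≤ ‖x‖ := by
  rw [EuclideanSpace.norm_eq]
  rw [show |x j| = Real.sqrt (|x j|^2) by rw [Real.sqrt_sq_eq_abs, abs_abs]]
  apply Real.sqrt_le_sqrt
  exact Finset.single_le_sum (f := fun k => |x k|^2) (fun k _ => sq_nonneg _) (Finset.mem_univ j)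

lemma FX_bound (v : E3) (i j : Fin 3) (x : E3) (G : ℝ) (hG : 0 ≤ G)
    (hg : ∀ k, |gX φ k x| ≤ G) :
    |FX φ v i j x| ≤ (3 + 2 * (∑ k, |v k|) ^ 2) * G ^ 2 := by
  set V := ∑ k, |v k| with hVdef
  have hV : 0 ≤ V := Finset.sum_nonneg fun k _ => abs_nonneg _
  have hw : |wX φ v x| ≤ V * G := by
    calc |wX φ v x| ≤ ∑ k, |v k * gX φ k x| := Finset.abs_sum_le_sum_abs _ _
    _ ≤ ∑ k, |v k| * G := by
        refine Finset.sum_le_sum fun k _ => ?_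
        rw [abs_mul]
        exact mul_le_mul_of_nonneg_left (hg k) (abs_nonneg _)
    _ = V * G := by rw [← Finset.sum_mul]
  have hvj : |v j| ≤ V :=
    Finset.single_le_sum (f := fun k => |v k|) (fun k _ => abs_nonneg _) (Finset.mem_univ j)
  have hc : |cX i j| ≤ 1/2 := by
    unfold cX; split <;> simp [abs_of_nonneg]
  have hQ : |∑ k, gX φ k x * gX φ k x - wX φ v x * wX φ v x| ≤ 3 * G^2 + (V*G)^2 := by
    refine (abs_sub _ _).trans ?_
    gcongr
    · calc |∑ k, gX φ k x * gX φ k x| ≤ ∑ k, |gX φ k x * gX φ k x| :=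
          Finset.abs_sum_le_sum_abs _ _
      _ ≤ ∑ _k : Fin 3, G * G := by
          refine Finset.sum_le_sum fun k _ => ?_
          rw [abs_mul]
          exact mul_le_mul (hg k) (hg k) (abs_nonneg _) hG
      _ = 3 * G^2 := by simp [Finset.sum_const]; ring
    · rw [abs_mul]
      have := mul_le_mul hw hw (abs_nonneg _) (by positivity : (0:ℝ) ≤ V * G)
      nlinarith
  have h1 : |FX φ v i j x| ≤ |gX φ j x| * |gX φ i x| + |v j| * (|wX φ v x| * |gX φ i x|)
      + |cX i j| * |∑ k, gX φ k x * gX φ k x - wX φ v x * wX φ v x| := by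
    unfold FX
    refine (abs_sub _ _).trans ?_
    gcongr
    · refine (abs_sub _ _).trans ?_
      rw [abs_mul, abs_mul, abs_mul]
    · exact le_of_eq (abs_mul _ _)
  refine h1.trans ?_
  have h2 : |gX φ j x| * |gX φ i x| ≤ G * G :=
    mul_le_mul (hg j) (hg i) (abs_nonneg _) hG
  have h3 : |v j| * (|wX φ v x| * |gX φ i x|) ≤ V * ((V*G) * G) := by
    refine mul_le_mul hvj ?_ (by positivity) hV
    exact mul_le_mul hw (hg i) (abs_nonneg _) (by positivity)
  have h4 : |cX i j| * |∑ k, gX φ k x * gX φ k x - wX φ v x * wX φ v x|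
      ≤ (1/2) * (3*G^2 + (V*G)^2) := mul_le_mul hc hQ (abs_nonneg _) (by norm_num)
  nlinarith [sq_nonneg (V*G), sq_nonneg G, sq_nonneg V, mul_nonneg hV hG]

lemma key (v : E3) (ρ : E3 → ℝ) (hρ : Continuous ρ) (hρc : HasCompactSupport ρ)
    (hφ : ContDiff ℝ 2 φ)
    (hdiv : ∀ x : E3, (∑ j, aX φ j j x) - (∑ j, ∑ k, v j * v k * aX φ j k x) = ρ x)
    (C : ℝ) (hC : 0 < C) (hg : ∀ (x : E3) (k : Fin 3), |gX φ k x| ≤ C / (1 + ‖x‖) ^ 2)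
    (i : Fin 3) : ∫ x : E3, ρ x * gX φ i x = 0 := by
  have hasF : ∀ (j : Fin 3) (x : E3), HasFDerivAt (FX φ v i j) (F'X φ v i j x) x := by
    intro j x
    exact (((hasFDerivAt_gX hφ j x).mul (hasFDerivAt_gX hφ i x)).sub
        (((HasFDerivAt.fun_sum fun k _ => (hasFDerivAt_gX hφ k x).const_mul (v k)).mul
          (hasFDerivAt_gX hφ i x)).const_mul (v j))).sub
      (((HasFDerivAt.fun_sum fun k _ => (hasFDerivAt_gX hφ k x).mul (hasFDerivAt_gX hφ k x)).sub
        ((HasFDerivAt.fun_sum fun k _ => (hasFDerivAt_gX hφ k x).const_mul (v k)).mul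
          (HasFDerivAt.fun_sum fun k _ => (hasFDerivAt_gX hφ k x).const_mul (v k)))).const_mul
        (cX i j))
  obtain ⟨r₀, hr₀⟩ := hρc.isBounded.subset_closedBall (0 : E3)
  set K := 3 + 2 * (∑ k, |v k|) ^ 2 with hKdef
  have hK0 : (0:ℝ) < K := by positivity
  set L := ∫ x : E3, ρ x * gX φ i x with hLdef
  have main : ∀ R : ℝ, 1 ≤ R → r₀ ≤ R → |L| ≤ 24 * K * C ^ 2 / R ^ 2 := by
    intro R hR1 hRr
    have hR0 : (0:ℝ) < R := lt_of_lt_of_le one_pos hR1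
    set a : Fin 3 → ℝ := fun _ => -R with hadef
    set b : Fin 3 → ℝ := fun _ => R with hbdef
    have hab : a ≤ b := fun _ => by simp [hadef, hbdef]; linarith
    have hdiveq : ∀ y : Fin 3 → ℝ,
        (∑ j, ((F'X φ v i j ((WithLp.equiv 2 (Fin 3 → ℝ)).symm y)).comp
            (((EuclideanSpace.equiv (Fin 3) ℝ).symm :
              (Fin 3 → ℝ) ≃L[ℝ] E3) : (Fin 3 → ℝ) →L[ℝ] E3)) (Pi.single j 1))
          = ρ ((WithLp.equiv 2 (Fin 3 → ℝ)).symm y)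
            * gX φ i ((WithLp.equiv 2 (Fin 3 → ℝ)).symm y) := by
      intro y
      have h1 : ∀ j : Fin 3, ((F'X φ v i j ((WithLp.equiv 2 (Fin 3 → ℝ)).symm y)).comp
          (((EuclideanSpace.equiv (Fin 3) ℝ).symm :
            (Fin 3 → ℝ) ≃L[ℝ] E3) : (Fin 3 → ℝ) →L[ℝ] E3)) (Pi.single j 1)
          = F'X φ v i j ((WithLp.equiv 2 (Fin 3 → ℝ)).symm y)
              (EuclideanSpace.single j (1:ℝ)) := fun j => rfl
      rw [Finset.sum_congr rfl fun j _ => h1 j, div_FX hφ v i _, hdiv _]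
    have hDT := integral_divergence_of_hasFDerivAt_off_countable' a b hab
      (fun j y => FX φ v i j ((WithLp.equiv 2 (Fin 3 → ℝ)).symm y))
      (fun j y => (F'X φ v i j ((WithLp.equiv 2 (Fin 3 → ℝ)).symm y)).comp
        (((EuclideanSpace.equiv (Fin 3) ℝ).symm :
          (Fin 3 → ℝ) ≃L[ℝ] E3) : (Fin 3 → ℝ) →L[ℝ] E3))
      ∅ Set.countable_empty
      (fun j => ((continuous_FX hφ v i j).comp
        (EuclideanSpace.equiv (Fin 3) ℝ).symm.continuous).continuousOn)
      (fun y _ j => HasFDerivAt.comp y (hasF j _)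
        (((EuclideanSpace.equiv (Fin 3) ℝ).symm :
          (Fin 3 → ℝ) ≃L[ℝ] E3) : (Fin 3 → ℝ) →L[ℝ] E3).hasFDerivAt)
      (by
        rw [show (fun y => ∑ j : Fin 3, ((F'X φ v i j ((WithLp.equiv 2 (Fin 3 → ℝ)).symm y)).comp
            (((EuclideanSpace.equiv (Fin 3) ℝ).symm :
              (Fin 3 → ℝ) ≃L[ℝ] E3) : (Fin 3 → ℝ) →L[ℝ] E3)) (Pi.single j 1))
            = fun y => ρ ((WithLp.equiv 2 (Fin 3 → ℝ)).symm y)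
              * gX φ i ((WithLp.equiv 2 (Fin 3 → ℝ)).symm y) from funext hdiveq]
        exact (((hρ.comp (EuclideanSpace.equiv (Fin 3) ℝ).symm.continuous).mul
          ((continuous_gX hφ i).comp
            (EuclideanSpace.equiv (Fin 3) ℝ).symm.continuous)).continuousOn).integrableOn_compact
          isCompact_Icc)
    -- rewrite LHS of hDT as L
    have hzero : ∀ x : E3, x ∉ (MeasurableEquiv.toLp 2 (Fin 3 → ℝ)).symm ⁻¹' (Set.Icc a b) →
        ρ x * gX φ i x = 0 := by
      intro x hx
      have hρx : ρ x = 0 := by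
        apply image_eq_zero_of_notMem_tsupport
        intro hmem
        apply hx
        have hxn : ‖x‖ ≤ r₀ := mem_closedBall_zero_iff.mp (hr₀ hmem)
        refine Set.mem_preimage.mpr (Set.mem_Icc.mpr ⟨fun j => ?_, fun j => ?_⟩)
        · have h1 := (abs_le.mp ((abs_coord_le_norm x j).trans hxn)).1
          show -R ≤ x j
          linarith
        · have h2 := (abs_le.mp ((abs_coord_le_norm x j).trans hxn)).2
          show x j ≤ R
          linarith
      rw [hρx, zero_mul]
    have hL1 : (∫ y in Set.Icc a b,
        ∑ j : Fin 3, ((F'X φ v i j ((WithLp.equiv 2 (Fin 3 → ℝ)).symm y)).comp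
          (((EuclideanSpace.equiv (Fin 3) ℝ).symm :
            (Fin 3 → ℝ) ≃L[ℝ] E3) : (Fin 3 → ℝ) →L[ℝ] E3)) (Pi.single j 1)) = L := by
      rw [funext hdiveq]
      have mp := EuclideanSpace.volume_preserving_symm_measurableEquiv_toLp (Fin 3)
      have htr := mp.setIntegral_preimage_emb
        (MeasurableEquiv.toLp 2 (Fin 3 → ℝ)).symm.measurableEmbedding
        (fun y => ρ ((WithLp.equiv 2 (Fin 3 → ℝ)).symm y)
          * gX φ i ((WithLp.equiv 2 (Fin 3 → ℝ)).symm y)) (Set.Icc a b)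
      rw [← htr]
      exact setIntegral_eq_integral_of_forall_compl_eq_zero hzero
    -- bound the face integrals
    have hface : ∀ (j : Fin 3) (c : ℝ), |c| = R →
        |∫ y in Set.Icc (a ∘ j.succAbove) (b ∘ j.succAbove),
          FX φ v i j ((WithLp.equiv 2 (Fin 3 → ℝ)).symm (j.insertNth c y))|
        ≤ K * (C / (1+R)^2)^2 * (2*R)^2 := by
      intro j c hc
      have hfin : volume (Set.Icc (a ∘ j.succAbove) (b ∘ j.succAbove)) < ⊤ :=
        IsCompact.measure_lt_top isCompact_Icc
      have hvol : (volume (Set.Icc (a ∘ j.succAbove) (b ∘ j.succAbove))).toReal = (2*R)^2 := by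
        rw [Real.volume_Icc_pi_toReal (fun k => by
          show (-R : ℝ) ≤ R; linarith)]
        simp [Function.comp, Finset.prod_const, Finset.card_univ]
        ring
      have hpt : ∀ y ∈ Set.Icc (a ∘ j.succAbove) (b ∘ j.succAbove),
          ‖FX φ v i j ((WithLp.equiv 2 (Fin 3 → ℝ)).symm (j.insertNth c y))‖
          ≤ K * (C / (1+R)^2)^2 := by
        intro y _
        set x' := (WithLp.equiv 2 (Fin 3 → ℝ)).symm (j.insertNth c y) with hx'
        have hRx : R ≤ ‖x'‖ := by
          have h1 : x' j = c := by
            simp [hx', Fin.insertNth_apply_same]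
          have h2 := abs_coord_le_norm x' j
          rw [h1, hc] at h2
          exact h2
        have hGle : ∀ k, |gX φ k x'| ≤ C / (1+R)^2 := by
          intro k
          refine (hg x' k).trans ?_
          gcongr
        rw [Real.norm_eq_abs]
        exact FX_bound v i j x' _ (by positivity) hGle
      calc |∫ y in Set.Icc (a ∘ j.succAbove) (b ∘ j.succAbove),
            FX φ v i j ((WithLp.equiv 2 (Fin 3 → ℝ)).symm (j.insertNth c y))|
          ≤ K * (C / (1+R)^2)^2 * (volume (Set.Icc (a ∘ j.succAbove) (b ∘ j.succAbove))).toReal := by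
            rw [← Real.norm_eq_abs]
            exact norm_setIntegral_le_of_norm_le_const hfin hpt
        _ = K * (C / (1+R)^2)^2 * (2*R)^2 := by rw [hvol]
    rw [hL1] at hDT
    have habs : |L| ≤ ∑ _j : Fin 3,
        (K * (C / (1+R)^2)^2 * (2*R)^2 + K * (C / (1+R)^2)^2 * (2*R)^2) := by
      rw [hDT]
      refine (Finset.abs_sum_le_sum_abs _ _).trans (Finset.sum_le_sum fun j _ => ?_)
      refine (abs_sub _ _).trans ?_
      exact add_le_add (hface j (b j) (abs_of_pos hR0)) (hface j (a j) (by
        show |(-R : ℝ)| = R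
        rw [abs_neg, abs_of_pos hR0]))
    have h6 : |L| ≤ 6 * (K * (C / (1+R)^2)^2 * (2*R)^2) := by
      rw [Finset.sum_const, Finset.card_univ] at habs
      simp only [Fintype.card_fin, nsmul_eq_mul] at habs
      linarith
    refine h6.trans ?_
    rw [div_pow]
    have h1 : 6 * (K * (C^2/((1+R)^2)^2) * (2*R)^2) = 24*K*C^2*R^2 / ((1+R)^2)^2 := by
      field_simp
      ring
    rw [h1, div_le_div_iff₀ (by positivity) (by positivity)]
    have h2 : R^2*R^2 ≤ ((1+R)^2)^2 := by nlinarith [hR0.le]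
    nlinarith [mul_le_mul_of_nonneg_left h2 (by positivity : (0:ℝ) ≤ 24*K*C^2)]
  -- conclude L = 0
  have ht : Filter.Tendsto (fun R : ℝ => 24 * K * C ^ 2 / R ^ 2) Filter.atTop (nhds 0) :=
    Filter.Tendsto.div_atTop tendsto_const_nhds (Filter.tendsto_pow_atTop (by norm_num))
  have hev : ∀ᶠ R in Filter.atTop, |L| ≤ 24 * K * C ^ 2 / R ^ 2 :=
    Filter.eventually_atTop.mpr ⟨max 1 r₀, fun R hR =>
      main R (le_trans (le_max_left _ _) hR) (le_trans (le_max_right _ _) hR)⟩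
  have hle : |L| ≤ 0 := ge_of_tendsto ht hev
  exact abs_eq_zero.mp (le_antisymm hle (abs_nonneg L))
end key

lemma pdR_eq (i : Fin 3) (f : EuclideanSpace ℝ (Fin 3) → ℝ)
    (x : EuclideanSpace ℝ (Fin 3)) (hf : DifferentiableAt ℝ f x) :
    pdR i f x = fderiv ℝ f x (EuclideanSpace.single i 1) := by
  have h1 : HasDerivAt (fun s : ℝ => x + s • EuclideanSpace.single i (1:ℝ))
      (EuclideanSpace.single i (1:ℝ)) 0 := by
    simpa using ((hasDerivAt_id (0:ℝ)).smul_const (EuclideanSpace.single i (1:ℝ))).const_add x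
  have hx : x + (0:ℝ) • EuclideanSpace.single i (1:ℝ) = x := by simp
  have h2 : HasDerivAt (fun s : ℝ => f (x + s • EuclideanSpace.single i (1:ℝ)))
      (fderiv ℝ f x (EuclideanSpace.single i 1)) 0 := by
    have := (hx ▸ hf).hasFDerivAt.comp_hasDerivAt 0 h1
    rw [hx] at this
    exact this
  exact h2.deriv


lemma pdR_eq_gX {φ : E3 → ℝ} (hφ : ContDiff ℝ 2 φ) (k : Fin 3) :
    (fun y => pdR k φ y) = gX φ k := by
  funext y
  exact pdR_eq k φ y (hφ.differentiable two_ne_zero y)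

lemma pdR_pdR {φ : E3 → ℝ} (hφ : ContDiff ℝ 2 φ) (j k : Fin 3) (x : E3) :
    pdR j (fun y => pdR k φ y) x = aX φ j k x := by
  rw [pdR_eq_gX hφ, pdR_eq j _ x ((hasFDerivAt_gX hφ k x).differentiableAt),
    (hasFDerivAt_gX hφ k x).fderiv]
  rfl

/-- **Orthogonality of the soliton profile to the force (vanishing self-force).**
If `φ` is a `C²` solution of the comoving-frame profile equation
`Δφ − (v·∇)²φ = ρ` with `|∇φ(x)| ≤ C/(1+|x|)²` and bounded second derivatives,
then `∫ ρ(x) ∇φ(x) dx = 0`. -/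
theorem soliton_self_force_vanishes
    (v : EuclideanSpace ℝ (Fin 3))
    (ρ : EuclideanSpace ℝ (Fin 3) → ℝ) (hρ : ContDiff ℝ (⊤ : ℕ∞) ρ) (hρc : HasCompactSupport ρ)
    (φ : EuclideanSpace ℝ (Fin 3) → ℝ) (hφ : ContDiff ℝ 2 φ)
    (heq : ∀ x : EuclideanSpace ℝ (Fin 3),
      (∑ i : Fin 3, pdR i (fun y => pdR i φ y) x)
        - (∑ j : Fin 3, ∑ k : Fin 3, v j * v k * pdR j (fun y => pdR k φ y) x)
      = ρ x)
    (C : ℝ) (hC : 0 < C)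
    (hdecay : ∀ x : EuclideanSpace ℝ (Fin 3), ‖gradR φ x‖ ≤ C / (1 + ‖x‖) ^ 2)
    (M : ℝ)
    (hM : ∀ (x : EuclideanSpace ℝ (Fin 3)) (i j : Fin 3),
      |pdR i (fun y => pdR j φ y) x| ≤ M) :
    (∫ x : EuclideanSpace ℝ (Fin 3), ρ x • gradR φ x) = 0 := by
  have hgeq : ∀ (k : Fin 3) (x : EuclideanSpace ℝ (Fin 3)), pdR k φ x = gX φ k x :=
    fun k x => pdR_eq k φ x (hφ.differentiable two_ne_zero x)
  have hgradeq : ∀ x : EuclideanSpace ℝ (Fin 3),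
      gradR φ x = (EuclideanSpace.equiv (Fin 3) ℝ).symm (fun k => gX φ k x) := by
    intro x
    unfold gradR
    congr 1
    funext k
    exact hgeq k x
  have hgradapp : ∀ (x : EuclideanSpace ℝ (Fin 3)) (k : Fin 3), gradR φ x k = gX φ k x := by
    intro x k
    rw [hgradeq x]
    rfl
  have hg : ∀ (x : EuclideanSpace ℝ (Fin 3)) (k : Fin 3), |gX φ k x| ≤ C / (1 + ‖x‖) ^ 2 := by
    intro x k
    rw [show gX φ k x = gradR φ x k from (hgradapp x k).symm]
    exact (abs_coord_le_norm _ k).trans (hdecay x)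
  have hdiv : ∀ x : EuclideanSpace ℝ (Fin 3),
      (∑ j, aX φ j j x) - (∑ j, ∑ k, v j * v k * aX φ j k x) = ρ x := by
    intro x
    have h0 := heq x
    simp only [pdR_pdR hφ] at h0
    exact h0
  have hzero := fun i : Fin 3 => key v ρ hρ.continuous hρc hφ hdiv C hC hg i
  have hgradc : Continuous (gradR φ) := by
    rw [show gradR φ = fun x => (EuclideanSpace.equiv (Fin 3) ℝ).symm (fun k => gX φ k x)
      from funext hgradeq]
    exact (EuclideanSpace.equiv (Fin 3) ℝ).symm.continuous.comp
      (continuous_pi fun k => continuous_gX hφ k)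
  have hint : Integrable (fun x : EuclideanSpace ℝ (Fin 3) => ρ x • gradR φ x) := by
    apply Continuous.integrable_of_hasCompactSupport
    · exact hρ.continuous.smul hgradc
    · exact hρc.smul_right
  have hcomp : ∀ i : Fin 3, (∫ x : EuclideanSpace ℝ (Fin 3), ρ x • gradR φ x) i = 0 := by
    intro i
    have h1 := ContinuousLinearMap.integral_comp_comm (EuclideanSpace.proj (𝕜 := ℝ) i) hint
    have h2 : (fun x : EuclideanSpace ℝ (Fin 3) =>
        (EuclideanSpace.proj (𝕜 := ℝ) i) (ρ x • gradR φ x)) = fun x => ρ x * gX φ i x := by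
      funext x
      show (ρ x • gradR φ x) i = ρ x * gX φ i x
      rw [PiLp.smul_apply, hgradapp x i, smul_eq_mul]
    rw [h2] at h1
    rw [hzero i] at h1
    exact h1.symm
  ext i
  · exact hcomp i
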